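/- arXiv:dg-ga/9511001 — 3 statements merged into one kernel-verified Lean document; each statement's English description precedes it below -/
import Mathlib

section
/- Two Clifford systems {Pᵢ}, {Qᵢ} ∈ C(2m,n) are algebraically equivalent if and only if the quadratic harmonic morphisms F({Pᵢ}) and F({Qᵢ}) are domain-equivalent. -/
open Matrix BigOperators

/-- Partial derivative in the `i`-th coordinate direction. -/
noncomputable def pderiv {m : ℕ} (i : Fin m) (f : (Fin m → ℝ) → ℝ) : (Fin m → ℝ) → ℝ :=
  fun x => fderiv ℝ f x (Pi.single i 1)

/-- A map `ℝ^m → ℝ^n` is a harmonic morphism iff each component is harmonic and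
the map is horizontally weakly conformal. -/
def IsHarmonicMorphism {m n : ℕ} (φ : (Fin m → ℝ) → (Fin n → ℝ)) : Prop :=
  (∀ (α : Fin n) (x : Fin m → ℝ), ∑ i : Fin m, pderiv i (pderiv i fun y => φ y α) x = 0) ∧
  ∃ lam : (Fin m → ℝ) → ℝ, ∀ (x : Fin m → ℝ) (α β : Fin n),
      ∑ i : Fin m, pderiv i (fun y => φ y α) x * pderiv i (fun y => φ y β) x
        = lam x ^ 2 * (if α = β then 1 else 0)

/-- `A` is the family of symmetric component matrices of the quadratic map `φ`;
the components are genuine (nonzero) quadratic forms. -/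
def Represents {m n : ℕ} (A : Fin n → Matrix (Fin m) (Fin m) ℝ)
    (φ : (Fin m → ℝ) → (Fin n → ℝ)) : Prop :=
  (∀ α, (A α).IsSymm) ∧ (∀ α, A α ≠ 0) ∧ ∀ x α, φ x α = x ⬝ᵥ (A α).mulVec x

/-- A quadratic harmonic morphism. -/
def IsQuadraticHM {m n : ℕ} (φ : (Fin m → ℝ) → (Fin n → ℝ)) : Prop :=
  (∃ A, Represents A φ) ∧ IsHarmonicMorphism φ

/-- `μ` is an eigenvalue of `A`. -/
def HasEigen {m : ℕ} (A : Matrix (Fin m) (Fin m) ℝ) (μ : ℝ) : Prop :=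
  ∃ v : Fin m → ℝ, v ≠ 0 ∧ A.mulVec v = μ • v

/-- `φ` is Q-nonsingular: the common rank of the component matrices equals the
domain dimension. -/
def QNonsingular {m n : ℕ} (φ : (Fin m → ℝ) → (Fin n → ℝ)) : Prop :=
  ∃ A, Represents A φ ∧ ∀ α, (A α).rank = m

/-- `φ` is umbilical: all positive eigenvalues of the component matrices are equal. -/
def Umbilical {m n : ℕ} (φ : (Fin m → ℝ) → (Fin n → ℝ)) : Prop :=
  ∃ A, Represents A φ ∧ ∀ (α : Fin n) (μ ν : ℝ), 0 < μ → 0 < ν →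
    HasEigen (A α) μ → HasEigen (A α) ν → μ = ν

/-- `φ ∈ H₂¹(m,n)`: umbilical quadratic harmonic morphism with positive eigenvalue 1. -/
def MemH21 {m n : ℕ} (φ : (Fin m → ℝ) → (Fin n → ℝ)) : Prop :=
  IsQuadraticHM φ ∧ ∃ A, Represents A φ ∧
    ∀ α : Fin n, HasEigen (A α) 1 ∧ ∀ μ : ℝ, 0 < μ → HasEigen (A α) μ → μ = 1

/-- `G` is an orthogonal matrix. -/
def IsOrthoMat {m : ℕ} (G : Matrix (Fin m) (Fin m) ℝ) : Prop := Gᵀ * G = 1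

/-- Domain-equivalence: `φ = ψ ∘ G` for an orthogonal `G`. -/
def DomainEquiv {m n : ℕ} (φ ψ : (Fin m → ℝ) → (Fin n → ℝ)) : Prop :=
  ∃ G : Matrix (Fin m) (Fin m) ℝ, IsOrthoMat G ∧ ∀ x, φ x = ψ (G.mulVec x)

/-- Bi-equivalence: `φ = H⁻¹ ∘ ψ ∘ G` for orthogonal `G`, `H`. -/
def BiEquiv {m n : ℕ} (φ ψ : (Fin m → ℝ) → (Fin n → ℝ)) : Prop :=
  ∃ (G : Matrix (Fin m) (Fin m) ℝ) (H : Matrix (Fin n) (Fin n) ℝ),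
    IsOrthoMat G ∧ IsOrthoMat H ∧ ∀ x, φ x = H⁻¹.mulVec (ψ (G.mulVec x))

/-- A Clifford system: symmetric endomorphisms with `PᵢPⱼ + PⱼPᵢ = 2δᵢⱼ Id`. -/
def IsCliffordSystem {N n : ℕ} (P : Fin n → Matrix (Fin N) (Fin N) ℝ) : Prop :=
  (∀ i, (P i).IsSymm) ∧
  ∀ i j, P i * P j + P j * P i =
    if i = j then (2 : ℝ) • (1 : Matrix (Fin N) (Fin N) ℝ) else 0

/-- The map `F` sending a Clifford system to the quadratic map
`X ↦ (⟨P₁X,X⟩,…,⟨PₙX,X⟩)`. -/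
def cliffordMap {N n : ℕ} (P : Fin n → Matrix (Fin N) (Fin N) ℝ) :
    (Fin N → ℝ) → Fin n → ℝ := fun X α => X ⬝ᵥ (P α).mulVec X

/-- Algebraic equivalence of Clifford systems. -/
def CliffordAlgEquiv {N n : ℕ} (P Q : Fin n → Matrix (Fin N) (Fin N) ℝ) : Prop :=
  ∃ A : Matrix (Fin N) (Fin N) ℝ, IsOrthoMat A ∧ ∀ i, Q i = A * P i * Aᵀ

/-- Irreducibility: the space is not a direct sum of two nontrivial invariant subspaces. -/
def CliffordIrreducible {N n : ℕ} (P : Fin n → Matrix (Fin N) (Fin N) ℝ) : Prop :=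
  ¬∃ U V : Submodule ℝ (Fin N → ℝ), U ≠ ⊥ ∧ V ≠ ⊥ ∧ IsCompl U V ∧
    (∀ i, ∀ x ∈ U, (P i).mulVec x ∈ U) ∧ ∀ i, ∀ x ∈ V, (P i).mulVec x ∈ V

/-- An O-system: orthogonal endomorphisms with `τᵢᵗτⱼ + τⱼᵗτᵢ = 2δᵢⱼ Id`. -/
def IsOSystem {m n : ℕ} (τ : Fin n → Matrix (Fin m) (Fin m) ℝ) : Prop :=
  (∀ i, (τ i)ᵀ * τ i = 1) ∧
  ∀ i j, (τ i)ᵀ * τ j + (τ j)ᵀ * τ i =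
    if i = j then (2 : ℝ) • (1 : Matrix (Fin m) (Fin m) ℝ) else 0

/-- Algebraic equivalence of O-systems. -/
def OAlgEquiv {m n : ℕ} (τ ρ : Fin n → Matrix (Fin m) (Fin m) ℝ) : Prop :=
  ∃ θ : Matrix (Fin m) (Fin m) ℝ, IsOrthoMat θ ∧ ∀ i, ρ i = θ * τ i * θᵀ

/-- Block-diagonal direct sum of square matrices. -/
def bdiag {m l : ℕ} (A : Matrix (Fin m) (Fin m) ℝ) (B : Matrix (Fin l) (Fin l) ℝ) :
    Matrix (Fin (m + l)) (Fin (m + l)) ℝ :=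
  (Matrix.fromBlocks A 0 0 B).submatrix finSumFinEquiv.symm finSumFinEquiv.symm

/-- The block matrix `[[I,0],[0,-I]]`. -/
def assocP0 (m : ℕ) : Matrix (Fin (m + m)) (Fin (m + m)) ℝ :=
  (Matrix.fromBlocks 1 0 0 (-1)).submatrix finSumFinEquiv.symm finSumFinEquiv.symm

/-- The block matrix `[[0,τ],[τᵗ,0]]`. -/
def assocPi {m : ℕ} (τ : Matrix (Fin m) (Fin m) ℝ) : Matrix (Fin (m + m)) (Fin (m + m)) ℝ :=
  (Matrix.fromBlocks 0 τ τᵀ 0).submatrix finSumFinEquiv.symm finSumFinEquiv.symm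

/-- The Clifford system `(P₀,P₁,…,Pₙ)` associated to an O-system `(τ₁,…,τₙ)`. -/
def assocClifford {m n : ℕ} (τ : Fin n → Matrix (Fin m) (Fin m) ℝ) :
    Fin (n + 1) → Matrix (Fin (m + m)) (Fin (m + m)) ℝ :=
  Fin.cons (assocP0 m) fun j => assocPi (τ j)

/-- Direct sum of two maps: `(φ ⊕ ψ)(x,y) = φ(x) + ψ(y)`. -/
def dsum {m l n : ℕ} (φ : (Fin m → ℝ) → Fin n → ℝ) (ψ : (Fin l → ℝ) → Fin n → ℝ) :
    (Fin (m + l) → ℝ) → Fin n → ℝ :=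
  fun x => φ (fun i => x (Fin.castAdd l i)) + ψ fun j => x (Fin.natAdd m j)

/-- Transport a map along an equality of domain dimensions. -/
def reMap {a b n : ℕ} (h : a = b) (ψ : (Fin b → ℝ) → Fin n → ℝ) :
    (Fin a → ℝ) → Fin n → ℝ := fun x => ψ fun i => x (finCongr h.symm i)

/-- A separable quadratic harmonic morphism. -/
def Separable {M n : ℕ} (φ : (Fin M → ℝ) → Fin n → ℝ) : Prop :=
  ∃ (m l : ℕ) (h : M = m + l), 0 < m ∧ 0 < l ∧
    ∃ (φ₁ : (Fin m → ℝ) → Fin n → ℝ) (φ₂ : (Fin l → ℝ) → Fin n → ℝ),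
      IsQuadraticHM φ₁ ∧ IsQuadraticHM φ₂ ∧ φ = reMap h (dsum φ₁ φ₂)

/-- The `k`-fold direct sum `ψ₁ ⊕ … ⊕ ψₖ` of maps with the same domain dimension. -/
def bigDSum {k M n : ℕ} (ψ : Fin k → (Fin M → ℝ) → Fin n → ℝ) :
    (Fin (k * M) → ℝ) → Fin n → ℝ :=
  fun x => ∑ j : Fin k, ψ j fun i => x (finProdFinEquiv (j, i))

/-- Domain-minimality: no quadratic harmonic morphism into `ℝ^n` exists from a
smaller-dimensional domain. -/
def DomainMinimal {M n : ℕ} (φ : (Fin M → ℝ) → Fin n → ℝ) : Prop :=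
  IsQuadraticHM φ ∧ ∀ M' : ℕ, M' < M → ¬∃ ψ : (Fin M' → ℝ) → Fin n → ℝ, IsQuadraticHM ψ

/-- `m(n)`: dimensions of irreducible Clifford systems;
`m(1)=1, m(2)=2, m(3)=m(4)=4, m(5)=…=m(8)=8, m(n+8)=16m(n)`. -/
def mfun : ℕ → ℕ
  | 0 => 1
  | 1 => 1
  | 2 => 2
  | 3 => 4
  | 4 => 4
  | 5 => 8
  | 6 => 8
  | 7 => 8
  | 8 => 8
  | n + 9 => 16 * mfun (n + 1)

/-- The Hurwitz–Radon number: for `m = (2r+1)·2^(c+4d)` with `0 ≤ c ≤ 3`,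
`σ(m) = 2^c + 8d`. -/
def hrSigma (m : ℕ) : ℕ := 2 ^ (padicValNat 2 m % 4) + 8 * (padicValNat 2 m / 4)

/-! Substituting `x ↦ A x` turns the quadratic form of `Pᵢ` into that of `AᵀPᵢA`, which for
orthogonal `A` is `Qᵢ = APᵢAᵀ` rewritten. Conversely, by polarization a symmetric matrix is
determined by its quadratic form, so `F(P) = F(Q) ∘ G` forces `Pᵢ = GᵀQᵢG`. -/

namespace Matrix

variable {ι κ R : Type*} [Fintype ι]

theorem IsSymm.transpose_mul_mul [CommSemiring R] {M : Matrix ι ι R} (hM : M.IsSymm)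
    (A : Matrix ι κ R) : (Aᵀ * M * A).IsSymm := by
  simp only [IsSymm, transpose_mul, transpose_transpose, hM.eq, Matrix.mul_assoc]

theorem dotProduct_transpose_mul_mul_mulVec [Fintype κ] [CommSemiring R] (M : Matrix ι ι R)
    (A : Matrix ι κ R) (x : κ → R) :
    x ⬝ᵥ (Aᵀ * M * A) *ᵥ x = (A *ᵥ x) ⬝ᵥ M *ᵥ (A *ᵥ x) := by
  rw [← mulVec_mulVec, ← mulVec_mulVec, dotProduct_mulVec, vecMul_transpose]

theorem IsSymm.eq_zero_of_dotProduct_mulVec_self [DecidableEq ι] [CommRing R]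
    [IsAddTorsionFree R] {M : Matrix ι ι R} (hM : M.IsSymm)
    (h : ∀ x, x ⬝ᵥ M *ᵥ x = 0) : M = 0 := by
  ext i j
  have hdiag : ∀ k, M k k = 0 := fun k => by
    simpa [mulVec_single_one, single_one_dotProduct] using h (Pi.single k 1)
  have hpolar := h (Pi.single i 1 + Pi.single j 1)
  simp only [mulVec_add, add_dotProduct, dotProduct_add, mulVec_single_one,
    single_one_dotProduct, col_apply, hdiag, hM.apply i j] at hpolar
  rw [zero_add, add_zero, ← two_nsmul, ← smul_zero (2 : ℕ)] at hpolar
  exact nsmul_right_injective two_ne_zero hpolar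

theorem IsSymm.eq_of_dotProduct_mulVec_self_eq [DecidableEq ι] [CommRing R]
    [IsAddTorsionFree R] {M N : Matrix ι ι R} (hM : M.IsSymm) (hN : N.IsSymm)
    (h : ∀ x, x ⬝ᵥ M *ᵥ x = x ⬝ᵥ N *ᵥ x) : M = N :=
  sub_eq_zero.mp <| (hM.sub hN).eq_zero_of_dotProduct_mulVec_self fun x => by
    rw [sub_mulVec, dotProduct_sub, h, sub_self]

end Matrix

theorem IsOrthoMat.eq_mul_mul_transpose_iff {N : ℕ} {A P Q : Matrix (Fin N) (Fin N) ℝ}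
    (hA : IsOrthoMat A) : Q = A * P * Aᵀ ↔ P = Aᵀ * Q * A := by
  have hA' : A * Aᵀ = 1 := mul_eq_one_comm.mp hA
  constructor <;> rintro rfl
  · rw [← Matrix.mul_assoc, ← Matrix.mul_assoc, hA, Matrix.one_mul, Matrix.mul_assoc, hA,
      Matrix.mul_one]
  · rw [← Matrix.mul_assoc, ← Matrix.mul_assoc, hA', Matrix.one_mul, Matrix.mul_assoc, hA',
      Matrix.mul_one]

theorem cliffordMap_mulVec {N n : ℕ} (P : Fin n → Matrix (Fin N) (Fin N) ℝ)
    (A : Matrix (Fin N) (Fin N) ℝ) (x : Fin N → ℝ) :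
    cliffordMap P (A *ᵥ x) = cliffordMap (fun i => Aᵀ * P i * A) x :=
  funext fun i => (dotProduct_transpose_mul_mul_mulVec (P i) A x).symm

theorem cliffordMap_injective {N n : ℕ} {P Q : Fin n → Matrix (Fin N) (Fin N) ℝ}
    (hP : ∀ i, (P i).IsSymm) (hQ : ∀ i, (Q i).IsSymm) (h : cliffordMap P = cliffordMap Q) :
    P = Q :=
  funext fun i => (hP i).eq_of_dotProduct_mulVec_self_eq (hQ i) fun x => congrFun (congrFun h x) i

/-- Two Clifford systems `{Pᵢ}, {Qᵢ} ∈ C(2m,n)` are algebraically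
equivalent iff the quadratic harmonic morphisms `F({Pᵢ})` and `F({Qᵢ})` are
domain-equivalent. -/
theorem clifford_algEquiv_iff_domainEquiv {m n : ℕ}
    (P Q : Fin n → Matrix (Fin (m + m)) (Fin (m + m)) ℝ)
    (hP : IsCliffordSystem P) (hQ : IsCliffordSystem Q) :
    CliffordAlgEquiv P Q ↔ DomainEquiv (cliffordMap P) (cliffordMap Q) := by
  refine exists_congr fun A => and_congr_right fun hA => ?_
  calc (∀ i, Q i = A * P i * Aᵀ) ↔ P = fun i => Aᵀ * Q i * A := by
        simp only [hA.eq_mul_mul_transpose_iff, funext_iff]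
    _ ↔ cliffordMap P = cliffordMap fun i => Aᵀ * Q i * A :=
        ⟨congrArg cliffordMap, cliffordMap_injective hP.1 fun i => (hQ.1 i).transpose_mul_mul A⟩
    _ ↔ ∀ x, cliffordMap P x = cliffordMap Q (A *ᵥ x) := by
        rw [funext_iff]
        simp only [cliffordMap_mulVec]
end

section
/- For n ≥ 3, there exists no Q-nonsingular quadratic harmonic morphism φ: ℝ^{2m} → ℝ^n whose positive eigenvalues λ₁,…,λ_m are pairwise distinct. -/
open Matrix BigOperators

/-!
Write `Aα` for the component matrices. Horizontal conformality makes them pairwise anticommute,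
and Q-nonsingularity makes them invertible. Anticommuting with the invertible `A₁` exchanges the
`λ`- and `(-λ)`-eigenspaces of `A₀`, so `A₀` has the `2m` distinct eigenvalues `±λᵢ` and all its
eigenspaces are lines. The product `A₁A₂` commutes with `A₀`, hence preserves these lines; but it
is invertible and skew-symmetric, so it has no real eigenvector.
-/

theorem commute_mul_of_anticommute {R : Type*} [Ring R] {a b c : R} (hb : a * b + b * a = 0)
    (hc : a * c + c * a = 0) : Commute a (b * c) := by
  rw [Commute, SemiconjBy, ← mul_assoc, eq_neg_of_add_eq_zero_left hb, neg_mul, mul_assoc,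
    eq_neg_of_add_eq_zero_left hc, mul_neg, neg_neg, mul_assoc]

namespace Module.End

variable {K V : Type*} [Field K] [AddCommGroup V] [Module K V]

theorem hasEigenvector_neg_of_anticommute {f g : Module.End K V} (hfg : f * g + g * f = 0)
    (hg : Function.Injective g) {μ : K} {v : V} (hv : f.HasEigenvector μ v) :
    f.HasEigenvector (-μ) (g v) := by
  rw [hasEigenvector_iff, mem_eigenspace_iff] at hv ⊢
  refine ⟨?_, (map_ne_zero_iff g hg).2 hv.2⟩
  rw [← mul_apply, eq_neg_of_add_eq_zero_left hfg, LinearMap.neg_apply, mul_apply, hv.1,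
    map_smul, neg_smul]

variable [FiniteDimensional K V]

theorem finrank_eigenspace_eq_one_of_card_eq_finrank {f : Module.End K V} {s : Finset K}
    (hs : s.card = finrank K V) (hf : ∀ μ ∈ s, f.HasEigenvalue μ) {μ : K}
    (hμ : f.HasEigenvalue μ) : finrank K (f.eigenspace μ) = 1 := by
  classical
  have hroots : s.val = f.charpoly.roots := by
    refine Multiset.eq_of_le_of_card_le ((Multiset.le_iff_subset s.nodup).2 fun ν hν => ?_) ?_
    · exact (Polynomial.mem_roots f.charpoly_monic.ne_zero).2
        ((hasEigenvalue_iff_isRoot_charpoly f ν).1 (hf ν hν))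
    · rw [Finset.card_val, hs, ← LinearMap.charpoly_natDegree f]
      exact Polynomial.card_roots' _
  have hle : finrank K (f.eigenspace μ) ≤ 1 := by
    refine (LinearMap.finrank_eigenspace_le f μ).trans ?_
    rw [← Polynomial.count_roots, ← hroots]
    exact Multiset.nodup_iff_count_le_one.1 s.nodup μ
  have hne : finrank K (f.eigenspace μ) ≠ 0 := by
    rw [Ne, Submodule.finrank_eq_zero]
    exact hμ
  omega

theorem exists_apply_eq_smul_of_commute {f g : Module.End K V} {s : Finset K}
    (hs : s.card = finrank K V) (hf : ∀ μ ∈ s, f.HasEigenvalue μ) (hfg : Commute f g)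
    {μ : K} {v : V} (hv : f.HasEigenvector μ v) : ∃ c : K, g v = c • v := by
  have hgv : g v ∈ f.eigenspace μ := by
    rw [mem_eigenspace_iff, ← mul_apply, hfg.eq, mul_apply, mem_eigenspace_iff.1 hv.1, map_smul]
  have hline :=
    finrank_eigenspace_eq_one_of_card_eq_finrank hs hf (hasEigenvalue_of_hasEigenvector hv)
  obtain ⟨c, hc⟩ := (finrank_eq_one_iff_of_nonzero' (⟨v, hv.1⟩ : f.eigenspace μ)
    (by simpa using hv.2)).1 hline ⟨g v, hgv⟩
  exact ⟨c, (congrArg Subtype.val hc).symm⟩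

theorem exists_mul_apply_eq_smul_of_anticommute [LinearOrder K] [IsStrictOrderedRing K]
    {ι : Type*} [Fintype ι] {lam : ι → K} (hlam : Function.Injective lam) (hpos : ∀ i, 0 < lam i)
    (hdim : finrank K V = Fintype.card ι + Fintype.card ι) {f g h : Module.End K V}
    (hf : ∀ i, f.HasEigenvalue (lam i)) (hg : Function.Injective g) (hfg : f * g + g * f = 0)
    (hfh : f * h + h * f = 0) {μ : K} {v : V} (hv : f.HasEigenvector μ v) :
    ∃ c : K, (g * h) v = c • v := by
  classical
  have hsigned : Function.Injective (Sum.elim lam (-lam)) :=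
    hlam.sumElim (neg_injective.comp hlam) fun i j hij =>
      by linarith [hpos i, hpos j, show lam i = -lam j from hij]
  refine exists_apply_eq_smul_of_commute (s := Finset.univ.image (Sum.elim lam (-lam)))
    (by simp [Finset.card_image_of_injective _ hsigned, hdim]) ?_
    (commute_mul_of_anticommute hfg hfh) hv
  intro ν hν
  obtain ⟨i | i, -, rfl⟩ := Finset.mem_image.1 hν
  · exact hf i
  · obtain ⟨w, hw⟩ := (hf i).exists_hasEigenvector
    exact hasEigenvalue_of_hasEigenvector (hasEigenvector_neg_of_anticommute hfg hg hw)

end Module.End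

namespace Matrix

variable {ι : Type*} [Fintype ι]

theorem add_transpose_eq_zero_of_forall_dotProduct_mulVec_self {R : Type*} [CommRing R]
    [DecidableEq ι] {B : Matrix ι ι R} (h : ∀ x, x ⬝ᵥ B *ᵥ x = 0) : B + Bᵀ = 0 := by
  have hdiag : ∀ i, B i i = 0 := fun i => by
    simpa [mulVec_single_one, single_one_dotProduct] using h (Pi.single i 1)
  ext i j
  have hij := h (Pi.single i 1 + Pi.single j 1)
  simp only [mulVec_add, dotProduct_add, add_dotProduct, mulVec_single_one, single_one_dotProduct,
    col_apply, hdiag] at hij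
  simp only [add_apply, transpose_apply, zero_apply]
  linear_combination hij

theorem IsSymm.eq_zero_of_forall_dotProduct_mulVec_self {R : Type*} [CommRing R]
    [NoZeroDivisors R] [CharZero R] [DecidableEq ι] {B : Matrix ι ι R} (hB : B.IsSymm)
    (h : ∀ x, x ⬝ᵥ B *ᵥ x = 0) : B = 0 := by
  have h2 := add_transpose_eq_zero_of_forall_dotProduct_mulVec_self h
  rw [hB.eq] at h2
  ext i j
  exact add_self_eq_zero.1 (congrFun (congrFun h2 i) j)

theorem dotProduct_mulVec_self_eq_zero_of_transpose_eq_neg {R : Type*} [CommRing R]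
    [NoZeroDivisors R] [CharZero R] {B : Matrix ι ι R} (hB : Bᵀ = -B) (x : ι → R) :
    x ⬝ᵥ B *ᵥ x = 0 := by
  have h : x ⬝ᵥ Bᵀ *ᵥ x = x ⬝ᵥ B *ᵥ x := by
    rw [mulVec_transpose, dotProduct_comm, dotProduct_mulVec]
  rw [hB, neg_mulVec, dotProduct_neg, neg_eq_iff_add_eq_zero, add_self_eq_zero] at h
  exact h

theorem eq_zero_of_mulVec_eq_smul_of_transpose_eq_neg {R : Type*} [Field R] [LinearOrder R]
    [IsStrictOrderedRing R] {B : Matrix ι ι R} (hB : Bᵀ = -B) {c : R} {v : ι → R}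
    (hv : B *ᵥ v = c • v) (hv0 : v ≠ 0) : c = 0 := by
  have h := dotProduct_mulVec_self_eq_zero_of_transpose_eq_neg hB v
  rw [hv, dotProduct_smul, smul_eq_mul] at h
  exact (mul_eq_zero.1 h).resolve_right (fun h0 => hv0 (dotProduct_self_eq_zero.1 h0))

theorem mulVec_injective_of_rank_eq_card {K : Type*} [Field K] [DecidableEq ι]
    {A : Matrix ι ι K} (h : A.rank = Fintype.card ι) : Function.Injective A.mulVec := by
  have hrange : LinearMap.range A.mulVecLin = ⊤ :=
    Submodule.eq_top_of_finrank_eq (by rw [← rank, h, Module.finrank_fintype_fun_eq_card])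
  exact LinearMap.injective_iff_surjective.2 (LinearMap.range_eq_top.1 hrange)

end Matrix

theorem hasEigen_iff_hasEigenvalue {m : ℕ} {A : Matrix (Fin m) (Fin m) ℝ} {μ : ℝ} :
    HasEigen A μ ↔ Module.End.HasEigenvalue (toLinAlgEquiv' A) μ := by
  constructor
  · rintro ⟨v, hv0, hv⟩
    refine Module.End.hasEigenvalue_of_hasEigenvector ⟨?_, hv0⟩
    rwa [Module.End.mem_eigenspace_iff, toLinAlgEquiv'_apply]
  · intro h
    obtain ⟨v, hv⟩ := h.exists_hasEigenvector
    exact ⟨v, hv.2, by simpa [toLinAlgEquiv'_apply] using hv.apply_eq_smul⟩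

theorem pderiv_dotProduct_mulVec_self {N : ℕ} (A : Matrix (Fin N) (Fin N) ℝ) (i : Fin N)
    (x : Fin N → ℝ) : pderiv i (fun y => y ⬝ᵥ A *ᵥ y) x = (A *ᵥ x) i + (x ᵥ* A) i := by
  set B := (toBilin' A).toContinuousBilinearMap
  have hB : (fun y : Fin N → ℝ => y ⬝ᵥ A *ᵥ y) = fun y => B (id y) (id y) := by
    ext y; simp [B, LinearMap.toContinuousBilinearMap_apply, toBilin'_apply']
  rw [pderiv, hB, (B.hasFDerivAt_of_bilinear (hasFDerivAt_id x) (hasFDerivAt_id x)).fderiv]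
  simp [B, LinearMap.toContinuousBilinearMap_apply, toBilin'_apply', mulVec_single,
    single_dotProduct, vecMul_apply, add_comm]

namespace Represents

variable {m n : ℕ} {φ : (Fin m → ℝ) → Fin n → ℝ} {A : Fin n → Matrix (Fin m) (Fin m) ℝ}

theorem unique {A' : Fin n → Matrix (Fin m) (Fin m) ℝ} (hA : Represents A φ)
    (hA' : Represents A' φ) : A = A' := by
  funext α
  refine sub_eq_zero.1 (((hA.1 α).sub (hA'.1 α)).eq_zero_of_forall_dotProduct_mulVec_self ?_)
  intro x
  rw [sub_mulVec, dotProduct_sub, ← hA.2.2 x α, ← hA'.2.2 x α, sub_self]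

theorem mulVec_injective_of_qNonsingular (hA : Represents A φ) (hφ : QNonsingular φ)
    (α : Fin n) : Function.Injective (A α).mulVec := by
  obtain ⟨A', hA', hrank⟩ := hφ
  exact mulVec_injective_of_rank_eq_card (by rw [hA.unique hA', hrank, Fintype.card_fin])

theorem pderiv_eq (hA : Represents A φ) (α : Fin n) (i : Fin m) (x : Fin m → ℝ) :
    pderiv i (fun y => φ y α) x = 2 * (A α *ᵥ x) i := by
  have hφα : (fun y => φ y α) = fun y => y ⬝ᵥ A α *ᵥ y := funext fun y => hA.2.2 y α
  rw [hφα, pderiv_dotProduct_mulVec_self, ← mulVec_transpose, (hA.1 α).eq]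
  ring

theorem anticommute_of_isHarmonicMorphism (hA : Represents A φ) (hφ : IsHarmonicMorphism φ)
    {α β : Fin n} (hαβ : α ≠ β) : A α * A β + A β * A α = 0 := by
  obtain ⟨dilation, hconf⟩ := hφ.2
  have horth : ∀ x, x ⬝ᵥ (A α * A β) *ᵥ x = 0 := by
    intro x
    have h := hconf x α β
    simp only [hA.pderiv_eq, if_neg hαβ, mul_zero] at h
    rw [← mulVec_mulVec, dotProduct_mulVec, ← mulVec_transpose, (hA.1 α).eq]
    calc (A α *ᵥ x) ⬝ᵥ (A β *ᵥ x)
        = (∑ i, 2 * (A α *ᵥ x) i * (2 * (A β *ᵥ x) i)) / 4 := by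
          rw [dotProduct, Finset.sum_div]
          exact Finset.sum_congr rfl fun i _ => by ring
      _ = 0 := by rw [h, zero_div]
  have h := add_transpose_eq_zero_of_forall_dotProduct_mulVec_self horth
  rwa [transpose_mul, (hA.1 α).eq, (hA.1 β).eq] at h

end Represents

/-- For `n ≥ 3` there is no Q-nonsingular quadratic harmonic
morphism `ℝ^{2m} → ℝ^n` whose positive eigenvalues `λ₁,…,λ_m` are pairwise
distinct. -/
theorem no_qnonsingular_qhm_with_distinct_eigenvalues (m n : ℕ) (hn : 3 ≤ n) :
    ¬∃ (φ : (Fin (m + m) → ℝ) → Fin n → ℝ)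
        (A : Fin n → Matrix (Fin (m + m)) (Fin (m + m)) ℝ) (lam : Fin m → ℝ),
        IsQuadraticHM φ ∧ QNonsingular φ ∧ Represents A φ ∧
          (∀ i, 0 < lam i) ∧ Function.Injective lam ∧
            ∀ (α : Fin n) (μ : ℝ), 0 < μ →
              (HasEigen (A α) μ ↔ ∃ i, lam i = μ) := by
  rintro ⟨φ, A, lam, hφ, hφ_nonsing, hA, hlam_pos, hlam_inj, hspec⟩
  obtain ⟨α₀, α₁, α₂, h01, h02, h12⟩ : ∃ α₀ α₁ α₂ : Fin n, α₀ ≠ α₁ ∧ α₀ ≠ α₂ ∧ α₁ ≠ α₂ :=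
    ⟨⟨0, by omega⟩, ⟨1, by omega⟩, ⟨2, by omega⟩, by simp [Fin.ext_iff]⟩
  have hm : 0 < m := Nat.pos_of_ne_zero fun hm => hA.2.1 α₀ (by subst hm; ext i; exact i.elim0)
  have hanti : ∀ {α β}, α ≠ β → A α * A β + A β * A α = 0 :=
    hA.anticommute_of_isHarmonicMorphism hφ.2
  set f : Fin n → Module.End ℝ (Fin (m + m) → ℝ) := fun α => toLinAlgEquiv' (A α)
  have hf_inj : ∀ α, Function.Injective (f α) := fun α => by
    rw [show ⇑(f α) = (A α).mulVec from funext (toLinAlgEquiv'_apply (A α))]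
    exact hA.mulVec_injective_of_qNonsingular hφ_nonsing α
  have hf_anti : ∀ {α β}, α ≠ β → f α * f β + f β * f α = 0 := fun hαβ => by
    simp only [f, ← map_mul, ← map_add, hanti hαβ, map_zero]
  have hf_spec : ∀ i, (f α₀).HasEigenvalue (lam i) := fun i =>
    hasEigen_iff_hasEigenvalue.1 ((hspec α₀ _ (hlam_pos i)).2 ⟨i, rfl⟩)
  obtain ⟨v, hv⟩ := (hf_spec ⟨0, hm⟩).exists_hasEigenvector
  obtain ⟨c, hc⟩ := Module.End.exists_mul_apply_eq_smul_of_anticommute hlam_inj hlam_pos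
    (by simp) hf_spec (hf_inj α₁) (hf_anti h01) (hf_anti h02) hv
  have hskew : (A α₁ * A α₂)ᵀ = -(A α₁ * A α₂) := by
    rw [transpose_mul, (hA.1 α₁).eq, (hA.1 α₂).eq, eq_neg_of_add_eq_zero_left (hanti h12.symm)]
  have hc0 : c = 0 := eq_zero_of_mulVec_eq_smul_of_transpose_eq_neg hskew
    (by simpa [f, ← map_mul, toLinAlgEquiv'_apply] using hc) hv.2
  rw [hc0, zero_smul, Module.End.mul_apply, map_eq_zero_iff _ (hf_inj α₁),
    map_eq_zero_iff _ (hf_inj α₂)] at hc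
  exact hv.2 hc
end

section
/- Every domain-minimal quadratic harmonic morphism φ: ℝ^{2m} → ℝ^n is umbilical. -/
open Matrix BigOperators

lemma rowCLM_eq {d : ℕ} (N : Matrix (Fin d) (Fin d) ℝ) (i : Fin d) :
    (fun y : Fin d → ℝ => (N.mulVec y) i)
      = fun y => (∑ j, N i j • (ContinuousLinearMap.proj j : (Fin d → ℝ) →L[ℝ] ℝ)) y := by
  funext y
  simp [Matrix.mulVec, dotProduct, ContinuousLinearMap.sum_apply]

lemma hasFDerivAt_quad {d : ℕ} (M : Matrix (Fin d) (Fin d) ℝ) (x : Fin d → ℝ) :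
    HasFDerivAt (fun y : Fin d → ℝ => y ⬝ᵥ M.mulVec y)
      (∑ i : Fin d, (x i • (∑ j, M i j • (ContinuousLinearMap.proj j : (Fin d → ℝ) →L[ℝ] ℝ))
        + (M.mulVec x) i • (ContinuousLinearMap.proj i : (Fin d → ℝ) →L[ℝ] ℝ))) x := by
  have h1 : ∀ i : Fin d, HasFDerivAt (fun y : Fin d → ℝ => y i * (M.mulVec y) i)
      (x i • (∑ j, M i j • (ContinuousLinearMap.proj j : (Fin d → ℝ) →L[ℝ] ℝ))
        + (M.mulVec x) i • (ContinuousLinearMap.proj i : (Fin d → ℝ) →L[ℝ] ℝ)) x := by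
    intro i
    have ha : HasFDerivAt (fun y : Fin d → ℝ => y i)
        (ContinuousLinearMap.proj i : (Fin d → ℝ) →L[ℝ] ℝ) x :=
      (ContinuousLinearMap.proj i : (Fin d → ℝ) →L[ℝ] ℝ).hasFDerivAt
    have hb : HasFDerivAt (fun y : Fin d → ℝ => (M.mulVec y) i)
        (∑ j, M i j • (ContinuousLinearMap.proj j : (Fin d → ℝ) →L[ℝ] ℝ)) x := by
      rw [rowCLM_eq]
      exact (∑ j, M i j • (ContinuousLinearMap.proj j : (Fin d → ℝ) →L[ℝ] ℝ)).hasFDerivAt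
    exact ha.mul hb
  have := HasFDerivAt.fun_sum (fun i (_ : i ∈ Finset.univ) => h1 i)
  exact this

lemma pderiv_linear {d : ℕ} (N : Matrix (Fin d) (Fin d) ℝ) (i j : Fin d) (x : Fin d → ℝ) :
    pderiv j (fun y => (N.mulVec y) i) x = N i j := by
  unfold pderiv
  rw [rowCLM_eq]
  rw [(∑ k, N i k • (ContinuousLinearMap.proj k : (Fin d → ℝ) →L[ℝ] ℝ)).fderiv]
  simp [ContinuousLinearMap.sum_apply, Pi.single_apply]

lemma pderiv_quad {d : ℕ} (M : Matrix (Fin d) (Fin d) ℝ) (i : Fin d) (x : Fin d → ℝ) :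
    pderiv i (fun y : Fin d → ℝ => y ⬝ᵥ M.mulVec y) x
      = (M.mulVec x) i + (Mᵀ.mulVec x) i := by
  unfold pderiv
  rw [(hasFDerivAt_quad M x).fderiv]
  simp only [ContinuousLinearMap.sum_apply, ContinuousLinearMap.add_apply,
    ContinuousLinearMap.smul_apply, ContinuousLinearMap.proj_apply, Pi.single_apply]
  rw [Finset.sum_add_distrib]
  have h1 : (∑ k, x k • ∑ j, M k j • (if j = i then (1:ℝ) else 0)) = (Mᵀ.mulVec x) i := by
    simp [Matrix.mulVec, dotProduct, Matrix.transpose_apply, mul_comm]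
  have h2 : (∑ k, (M.mulVec x) k • (if k = i then (1:ℝ) else 0)) = (M.mulVec x) i := by
    simp
  rw [h1, h2, add_comm]

lemma pderiv_quad_symm {d : ℕ} {M : Matrix (Fin d) (Fin d) ℝ} (hM : M.IsSymm)
    (i : Fin d) (x : Fin d → ℝ) :
    pderiv i (fun y : Fin d → ℝ => y ⬝ᵥ M.mulVec y) x = 2 * (M.mulVec x) i := by
  rw [pderiv_quad, hM.eq]; ring

lemma sum_pderiv_sq {d : ℕ} {M : Matrix (Fin d) (Fin d) ℝ} (hM : M.IsSymm) (x : Fin d → ℝ) :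
    ∑ i : Fin d, pderiv i (pderiv i fun y : Fin d → ℝ => y ⬝ᵥ M.mulVec y) x
      = 2 * M.trace := by
  have h : ∀ i : Fin d, pderiv i (pderiv i fun y : Fin d → ℝ => y ⬝ᵥ M.mulVec y) x
      = 2 * M i i := by
    intro i
    have he : (pderiv i fun y : Fin d → ℝ => y ⬝ᵥ M.mulVec y)
        = fun y => (((2:ℝ) • M).mulVec y) i := by
      funext y
      rw [pderiv_quad_symm hM]
      simp [Matrix.smul_mulVec]
    rw [he, pderiv_linear]
    simp
  rw [Finset.sum_congr rfl fun i _ => h i, ← Finset.mul_sum, Matrix.trace]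
  simp [Matrix.diag]

lemma quad_eq_of_symm {d : ℕ} {P Q : Matrix (Fin d) (Fin d) ℝ} (hP : P.IsSymm) (hQ : Q.IsSymm)
    (h : ∀ x : Fin d → ℝ, x ⬝ᵥ P.mulVec x = x ⬝ᵥ Q.mulVec x) : P = Q := by
  ext i j
  have hii := h (Pi.single i 1)
  have hjj := h (Pi.single j 1)
  have hij := h (Pi.single i 1 + Pi.single j 1)
  have key : ∀ R : Matrix (Fin d) (Fin d) ℝ, ∀ a b : Fin d,
      (Pi.single a 1 + Pi.single b 1 : Fin d → ℝ) ⬝ᵥ R.mulVec (Pi.single a 1 + Pi.single b 1)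
        = R a a + R a b + R b a + R b b := by
    intro R a b
    simp [Matrix.add_mulVec, Matrix.mulVec_add, dotProduct_add, add_dotProduct,
      Matrix.mulVec_single, single_dotProduct, dotProduct_single]
    ring
  have hsingle : ∀ R : Matrix (Fin d) (Fin d) ℝ, ∀ a : Fin d,
      (Pi.single a 1 : Fin d → ℝ) ⬝ᵥ R.mulVec (Pi.single a 1) = R a a := by
    intro R a
    simp [Matrix.mulVec_single, single_dotProduct]
  rw [key, key] at hij
  rw [hsingle, hsingle] at hii
  rw [hsingle, hsingle] at hjj
  have hPs : P j i = P i j := by have := congrFun (congrFun hP.eq i) j; simpa using this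
  have hQs : Q j i = Q i j := by have := congrFun (congrFun hQ.eq i) j; simpa using this
  -- from hij, hii, hjj, symmetry
  nlinarith [hij, hii, hjj]

lemma mul_isSymm {d : ℕ} {P Q : Matrix (Fin d) (Fin d) ℝ} (hP : P.IsSymm) (hQ : Q.IsSymm)
    (hcomm : P * Q = Q * P) : (P * Q).IsSymm := by
  unfold Matrix.IsSymm
  rw [Matrix.transpose_mul, hP.eq, hQ.eq, hcomm]

lemma sum_pderiv_mul {M : ℕ} {n : ℕ} {A : Fin n → Matrix (Fin M) (Fin M) ℝ}
    {φ : (Fin M → ℝ) → Fin n → ℝ} (hsymm : ∀ α, (A α).IsSymm)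
    (hval : ∀ x α, φ x α = x ⬝ᵥ (A α).mulVec x) (α β : Fin n) (x : Fin M → ℝ) :
    ∑ i : Fin M, pderiv i (fun y => φ y α) x * pderiv i (fun y => φ y β) x
      = 4 * (x ⬝ᵥ (A α * A β).mulVec x) := by
  have hfa : (fun y => φ y α) = fun y : Fin M → ℝ => y ⬝ᵥ (A α).mulVec y := by
    funext y; exact hval y α
  have hfb : (fun y => φ y β) = fun y : Fin M → ℝ => y ⬝ᵥ (A β).mulVec y := by
    funext y; exact hval y β
  rw [hfa, hfb]
  have : ∀ i, pderiv i (fun y : Fin M → ℝ => y ⬝ᵥ (A α).mulVec y) x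
      * pderiv i (fun y : Fin M → ℝ => y ⬝ᵥ (A β).mulVec y) x
      = 4 * (((A α).mulVec x) i * ((A β).mulVec x) i) := by
    intro i
    rw [pderiv_quad_symm (hsymm α), pderiv_quad_symm (hsymm β)]; ring
  rw [Finset.sum_congr rfl fun i _ => this i, ← Finset.mul_sum]
  congr 1
  have h1 : (A α).mulVec x = Matrix.vecMul x (A α) := by
    have := Matrix.mulVec_transpose (A α) x
    rwa [(hsymm α).eq] at this
  calc ∑ i : Fin M, ((A α).mulVec x) i * ((A β).mulVec x) i
      = ((A α).mulVec x) ⬝ᵥ ((A β).mulVec x) := rfl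
    _ = Matrix.vecMul x (A α) ⬝ᵥ ((A β).mulVec x) := by rw [h1]
    _ = x ⬝ᵥ (A α).mulVec ((A β).mulVec x) := (Matrix.dotProduct_mulVec _ _ _).symm
    _ = x ⬝ᵥ (A α * A β).mulVec x := by rw [Matrix.mulVec_mulVec]

lemma hm_extract {M : ℕ} {n : ℕ} {A : Fin n → Matrix (Fin M) (Fin M) ℝ}
    {φ : (Fin M → ℝ) → Fin n → ℝ} (hrep : Represents A φ) (hhm : IsHarmonicMorphism φ) :
    (∀ α, (A α).trace = 0) ∧ (∀ α β, A α * A α = A β * A β) ∧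
      (∀ α β, α ≠ β → A α * A β + A β * A α = 0) := by
  obtain ⟨hhar, lam, hconf⟩ := hhm
  obtain ⟨hsymm, -, hval⟩ := hrep
  have hsq : ∀ α, (A α * A α).IsSymm := fun α => mul_isSymm (hsymm α) (hsymm α) rfl
  refine ⟨?_, ?_, ?_⟩
  · intro α
    have h := hhar α 0
    have hfa : (fun y => φ y α) = fun y : Fin M → ℝ => y ⬝ᵥ (A α).mulVec y := by
      funext y; exact hval y α
    rw [hfa, sum_pderiv_sq (hsymm α)] at h
    linarith
  · intro α β
    apply quad_eq_of_symm (hsq α) (hsq β)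
    intro x
    have ha := hconf x α α
    have hb := hconf x β β
    rw [sum_pderiv_mul hsymm hval α α x] at ha
    rw [sum_pderiv_mul hsymm hval β β x] at hb
    simp only [if_pos rfl, mul_one] at ha hb
    nlinarith [ha, hb]
  · intro α β hne
    have hzero : ∀ x : Fin M → ℝ, x ⬝ᵥ (A α * A β).mulVec x = 0 := by
      intro x
      have h := hconf x α β
      rw [sum_pderiv_mul hsymm hval α β x, if_neg hne, mul_zero] at h
      linarith
    have hsum : (A α * A β) + (A α * A β)ᵀ = 0 := by
      have h1 : ((A α * A β) + (A α * A β)ᵀ).IsSymm := by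
        unfold Matrix.IsSymm
        rw [Matrix.transpose_add, Matrix.transpose_transpose, add_comm]
      have h2 : ((0 : Matrix (Fin M) (Fin M) ℝ)).IsSymm := by
        unfold Matrix.IsSymm; simp
      apply quad_eq_of_symm h1 h2
      intro x
      have ht : x ⬝ᵥ ((A α * A β)ᵀ).mulVec x = x ⬝ᵥ (A α * A β).mulVec x := by
        calc x ⬝ᵥ ((A α * A β)ᵀ).mulVec x
            = x ⬝ᵥ Matrix.vecMul x (A α * A β) := by rw [Matrix.mulVec_transpose]
          _ = Matrix.vecMul x (A α * A β) ⬝ᵥ x := dotProduct_comm _ _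
          _ = x ⬝ᵥ (A α * A β).mulVec x := by rw [← Matrix.dotProduct_mulVec]
      rw [Matrix.add_mulVec, dotProduct_add, ht, hzero x]
      simp
    calc A α * A β + A β * A α = A α * A β + (A α * A β)ᵀ := by
          rw [Matrix.transpose_mul, (hsymm α).eq, (hsymm β).eq]
      _ = 0 := hsum

lemma dot_self_nonneg {d : ℕ} (x : Fin d → ℝ) : 0 ≤ x ⬝ᵥ x :=
  Finset.sum_nonneg fun i _ => mul_self_nonneg (x i)

lemma qhm_of_system {d n : ℕ} (hd : 0 < d) (C : Fin n → Matrix (Fin d) (Fin d) ℝ) (c : ℝ)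
    (hc : 0 < c) (hsymm : ∀ α, (C α).IsSymm) (htr : ∀ α, (C α).trace = 0)
    (hsq : ∀ α, C α * C α = c • 1)
    (hanti : ∀ α β, α ≠ β → C α * C β + C β * C α = 0) :
    IsQuadraticHM (fun (x : Fin d → ℝ) (α : Fin n) => x ⬝ᵥ (C α).mulVec x) := by
  set ψ : (Fin d → ℝ) → Fin n → ℝ := fun x α => x ⬝ᵥ (C α).mulVec x with hψ
  have hval : ∀ (x : Fin d → ℝ) α, ψ x α = x ⬝ᵥ (C α).mulVec x := fun _ _ => rfl
  have hCne : ∀ α, C α ≠ 0 := by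
    intro α h0
    have := hsq α
    rw [h0, mul_zero] at this
    have h1 := congrFun (congrFun this ⟨0, hd⟩) ⟨0, hd⟩
    simp [Matrix.one_apply] at h1
    exact absurd h1.symm (ne_of_gt hc)
  refine ⟨⟨C, hsymm, hCne, hval⟩, ?_, ?_⟩
  · intro α x
    have hfa : (fun y => ψ y α) = fun y : Fin d → ℝ => y ⬝ᵥ (C α).mulVec y := rfl
    rw [hfa, sum_pderiv_sq (hsymm α), htr α, mul_zero]
  · refine ⟨fun x => Real.sqrt (4 * c * (x ⬝ᵥ x)), ?_⟩
    intro x α β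
    rw [sum_pderiv_mul hsymm hval α β x]
    have hnn : 0 ≤ 4 * c * (x ⬝ᵥ x) := by
      have := dot_self_nonneg x
      positivity
    rw [Real.sq_sqrt hnn]
    by_cases hab : α = β
    · subst hab
      rw [if_pos rfl, mul_one, hsq α]
      have : ((c • 1 : Matrix (Fin d) (Fin d) ℝ)).mulVec x = c • x := by
        rw [Matrix.smul_mulVec, Matrix.one_mulVec]
      rw [this, dotProduct_smul]
      simp [smul_eq_mul]
      ring
    · rw [if_neg hab, mul_zero]
      have hPQ := hanti α β hab
      have ht : x ⬝ᵥ (C β * C α).mulVec x = x ⬝ᵥ (C α * C β).mulVec x := by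
        have hba : C β * C α = (C α * C β)ᵀ := by
          rw [Matrix.transpose_mul, (hsymm α).eq, (hsymm β).eq]
        rw [hba]
        calc x ⬝ᵥ ((C α * C β)ᵀ).mulVec x
            = x ⬝ᵥ Matrix.vecMul x (C α * C β) := by rw [Matrix.mulVec_transpose]
          _ = Matrix.vecMul x (C α * C β) ⬝ᵥ x := dotProduct_comm _ _
          _ = x ⬝ᵥ (C α * C β).mulVec x := by rw [← Matrix.dotProduct_mulVec]
      have hzero : x ⬝ᵥ ((C α * C β) + (C β * C α)).mulVec x = 0 := by rw [hPQ]; simp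
      rw [Matrix.add_mulVec, dotProduct_add, ht] at hzero
      linarith

lemma eigen_sq {d : ℕ} {A : Matrix (Fin d) (Fin d) ℝ} {μ c : ℝ}
    (h : A * A = c • 1) (he : HasEigen A μ) : μ ^ 2 = c := by
  obtain ⟨v, hv, hAv⟩ := he
  have h2 : (A * A).mulVec v = (μ ^ 2) • v := by
    rw [← Matrix.mulVec_mulVec, hAv, Matrix.mulVec_smul, hAv, smul_smul]
    ring_nf
  rw [h, Matrix.smul_mulVec, Matrix.one_mulVec] at h2
  obtain ⟨i, hi⟩ := Function.ne_iff.1 hv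
  have := congrFun h2 i
  simp only [Pi.smul_apply, smul_eq_mul] at this
  have hvi : v i ≠ 0 := by simpa using hi
  field_simp at this
  linarith

lemma sum_orderEmb {MM k : ℕ} (S : Finset (Fin MM)) (h : S.card = k) (f : Fin MM → ℝ) :
    ∑ i : Fin k, f (S.orderEmbOfFin h i) = ∑ t ∈ S, f t := by
  apply Finset.sum_bij (fun (i : Fin k) (_ : i ∈ Finset.univ) => S.orderEmbOfFin h i)
  · intro a _; exact S.orderEmbOfFin_mem h a
  · intro a _ b _ hab; exact (S.orderEmbOfFin h).injective hab
  · intro b hb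
    have hrange : b ∈ Set.range (S.orderEmbOfFin h) := by
      rw [S.range_orderEmbOfFin h]; exact hb
    obtain ⟨a, ha⟩ := hrange
    exact ⟨a, Finset.mem_univ a, ha⟩
  · intro a _; rfl

lemma exists_smaller_qhm {M n : ℕ} (A : Fin n → Matrix (Fin M) (Fin M) ℝ)
    (hsymm : ∀ γ, (A γ).IsSymm)
    (hcard : 1 < Fintype.card (Fin n))
    (hsqeq : ∀ γ δ, A γ * A γ = A δ * A δ)
    (hanti : ∀ γ δ, γ ≠ δ → A γ * A δ + A δ * A γ = 0)
    (α : Fin n) {μ ν : ℝ} (hμν2 : μ ^ 2 ≠ ν ^ 2) (hν : 0 < ν)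
    (heμ : HasEigen (A α) μ) (heν : HasEigen (A α) ν) :
    ∃ d : ℕ, d < M ∧ ∃ ψ : (Fin d → ℝ) → Fin n → ℝ, IsQuadraticHM ψ := by
  classical
  set B := A α * A α with hB
  have hBsymm : B.IsSymm := mul_isSymm (hsymm α) (hsymm α) rfl
  have hBher : B.IsHermitian := by
    rw [Matrix.IsHermitian, Matrix.conjTranspose_eq_transpose_of_trivial]
    exact hBsymm
  set U : Matrix (Fin M) (Fin M) ℝ := (hBher.eigenvectorUnitary : Matrix (Fin M) (Fin M) ℝ)
    with hUdef
  set V : Matrix (Fin M) (Fin M) ℝ := star U with hVdef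
  have hmem := (hBher.eigenvectorUnitary).2
  rw [Unitary.mem_iff] at hmem
  have hVU : V * U = 1 := hmem.1
  have hUV : U * V = 1 := hmem.2
  have hVt : V = Uᵀ := Matrix.conjTranspose_eq_transpose_of_trivial U
  set w : Fin M → ℝ := hBher.eigenvalues with hwdef
  set D : Matrix (Fin M) (Fin M) ℝ := Matrix.diagonal w with hDdef
  have hofreal : (Matrix.diagonal (RCLike.ofReal ∘ w) : Matrix (Fin M) (Fin M) ℝ) = D := by
    rw [hDdef]; congr 1
  have hspec : B = U * D * V := by
    have h := hBher.spectral_theorem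
    rw [hofreal] at h
    exact h
  have hDVBU : D = V * B * U := by
    rw [hspec]
    have hassoc : V * (U * D * V) * U = (V * U) * (D * (V * U)) := by
      simp only [mul_assoc]
    rw [hassoc, hVU, one_mul, mul_one]
  set A' : Fin n → Matrix (Fin M) (Fin M) ℝ := fun γ => V * A γ * U with hA'def
  have hA'mul : ∀ γ δ, A' γ * A' δ = V * (A γ * A δ) * U := by
    intro γ δ
    calc (V * A γ * U) * (V * A δ * U) = (V * A γ) * (U * V) * (A δ * U) := by
          simp only [mul_assoc]
      _ = (V * A γ) * (A δ * U) := by rw [hUV, mul_one]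
      _ = V * (A γ * A δ) * U := by simp only [mul_assoc]
  have hA'sq : ∀ γ, A' γ * A' γ = D := by
    intro γ
    rw [hA'mul, hsqeq γ α, ← hB]
    exact hDVBU.symm
  have hA'anti : ∀ γ δ, γ ≠ δ → A' γ * A' δ + A' δ * A' γ = 0 := by
    intro γ δ hγδ
    have hz : V * (A γ * A δ + A δ * A γ) * U = 0 := by
      rw [hanti γ δ hγδ, mul_zero, zero_mul]
    rw [hA'mul γ δ, hA'mul δ γ, ← Matrix.add_mul, ← Matrix.mul_add]
    exact hz
  have hA'symm : ∀ γ, (A' γ)ᵀ = A' γ := by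
    intro γ
    show (V * A γ * U)ᵀ = V * A γ * U
    calc (V * A γ * U)ᵀ = Uᵀ * ((A γ)ᵀ * Vᵀ) := by
          rw [Matrix.transpose_mul, Matrix.transpose_mul]
      _ = V * (A γ * U) := by rw [(hsymm γ).eq, hVt, Matrix.transpose_transpose]
      _ = V * A γ * U := by rw [mul_assoc]
  have hA'comm : ∀ γ, A' γ * D = D * A' γ := by
    intro γ
    rw [← hA'sq γ]
    simp only [mul_assoc]
  have htrans : ∀ {ρ : ℝ}, HasEigen (A α) ρ → ∃ i, w i = ρ ^ 2 := by
    rintro ρ ⟨v, hv0, hAv⟩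
    have hBv : B.mulVec v = (ρ ^ 2) • v := by
      rw [hB, ← Matrix.mulVec_mulVec, hAv, Matrix.mulVec_smul, hAv, smul_smul]
      ring_nf
    set u := V.mulVec v with hu
    have hu0 : u ≠ 0 := by
      intro h0
      apply hv0
      have hUu : U.mulVec u = v := by
        rw [hu, Matrix.mulVec_mulVec, hUV, Matrix.one_mulVec]
      rw [← hUu, h0, Matrix.mulVec_zero]
    have hDu : D.mulVec u = (ρ ^ 2) • u := by
      rw [hDVBU, hu]
      calc (V * B * U) *ᵥ (V *ᵥ v) = ((V * B * U) * V) *ᵥ v := by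
            rw [Matrix.mulVec_mulVec]
        _ = (V * B) *ᵥ v := by rw [mul_assoc (V * B) U V, hUV, mul_one]
        _ = V *ᵥ (B *ᵥ v) := by rw [← Matrix.mulVec_mulVec]
        _ = (ρ ^ 2) • (V *ᵥ v) := by rw [hBv, Matrix.mulVec_smul]
    obtain ⟨i, hi⟩ := Function.ne_iff.1 hu0
    refine ⟨i, ?_⟩
    have hci := congrFun hDu i
    rw [hDdef] at hci
    rw [Matrix.mulVec_diagonal] at hci
    simp only [Pi.smul_apply, smul_eq_mul] at hci
    have hui : u i ≠ 0 := by simpa using hi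
    exact mul_right_cancel₀ hui hci
  obtain ⟨i0, hi0⟩ := htrans heμ
  obtain ⟨j0, hj0⟩ := htrans heν
  set S : Finset (Fin M) := Finset.univ.filter (fun k => w k = ν ^ 2) with hSdef
  have hj0S : j0 ∈ S := by rw [hSdef]; simp [hj0]
  have hi0S : i0 ∉ S := by
    rw [hSdef]
    simp only [Finset.mem_filter, Finset.mem_univ, true_and]
    rw [hi0]
    exact hμν2
  have hdpos : 0 < S.card := Finset.card_pos.2 ⟨j0, hj0S⟩
  have hdlt : S.card < M := by
    have hss : S ⊂ Finset.univ := Finset.ssubset_univ_iff.2 (by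
      intro h
      rw [h] at hi0S
      exact hi0S (Finset.mem_univ i0))
    have := Finset.card_lt_card hss
    simpa using this
  set e := S.orderEmbOfFin (rfl : S.card = S.card) with hedef
  have heS : ∀ i : Fin S.card, e i ∈ S := fun i => S.orderEmbOfFin_mem _ i
  have hwE : ∀ i : Fin S.card, w (e i) = ν ^ 2 := fun i =>
    (Finset.mem_filter.1 (heS i)).2
  have hvanish : ∀ γ (p q : Fin M), p ∈ S → q ∉ S → A' γ p q = 0 := by
    intro γ p q hp hq
    have hc := congrFun (congrFun (hA'comm γ) p) q
    rw [hDdef, Matrix.mul_diagonal, Matrix.diagonal_mul] at hc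
    have hwp : w p = ν ^ 2 := by rw [hSdef] at hp; simpa using hp
    have hwq : w q ≠ ν ^ 2 := by rw [hSdef] at hq; simpa using hq
    rw [hwp] at hc
    by_contra h0
    exact hwq (mul_left_cancel₀ h0 (hc.trans (mul_comm _ _)))
  set C : Fin n → Matrix (Fin S.card) (Fin S.card) ℝ :=
    fun γ => Matrix.of (fun i j => A' γ (e i) (e j)) with hCdef
  have hCmul : ∀ γ δ, C γ * C δ = Matrix.of (fun i j => (A' γ * A' δ) (e i) (e j)) := by
    intro γ δ
    ext i j
    show ∑ k : Fin S.card, A' γ (e i) (e k) * A' δ (e k) (e j) = (A' γ * A' δ) (e i) (e j)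
    rw [Matrix.mul_apply]
    rw [sum_orderEmb S rfl (fun t => A' γ (e i) t * A' δ t (e j))]
    apply Finset.sum_subset (Finset.subset_univ S)
    intro t _ htS
    rw [hvanish γ (e i) t (heS i) htS, zero_mul]
  have hCsq : ∀ γ, C γ * C γ = (ν ^ 2) • 1 := by
    intro γ
    rw [hCmul]
    ext i j
    show (A' γ * A' γ) (e i) (e j) = ((ν ^ 2) • (1 : Matrix (Fin S.card) (Fin S.card) ℝ)) i j
    rw [hA'sq γ, hDdef, Matrix.diagonal_apply, Matrix.smul_apply, Matrix.one_apply]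
    by_cases hij : i = j
    · subst hij
      rw [if_pos rfl, if_pos rfl, hwE]
      simp
    · rw [if_neg (fun h => hij (e.injective h)), if_neg hij]
      simp
  have hCsymm : ∀ γ, (C γ).IsSymm := by
    intro γ
    unfold Matrix.IsSymm
    ext i j
    show A' γ (e j) (e i) = A' γ (e i) (e j)
    conv_lhs => rw [← hA'symm γ]
    rw [Matrix.transpose_apply]
  have hCanti : ∀ γ δ, γ ≠ δ → C γ * C δ + C δ * C γ = 0 := by
    intro γ δ h
    rw [hCmul, hCmul]
    ext i j
    show (A' γ * A' δ) (e i) (e j) + (A' δ * A' γ) (e i) (e j) = 0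
    have := congrFun (congrFun (hA'anti γ δ h) (e i)) (e j)
    simpa using this
  have hν2 : (0:ℝ) < ν ^ 2 := by positivity
  have hCtr : ∀ γ, (C γ).trace = 0 := by
    intro γ
    obtain ⟨δ, hδ⟩ := Fintype.exists_ne_of_one_lt_card hcard γ
    have hdg : C δ * C γ = -(C γ * C δ) :=
      eq_neg_of_add_eq_zero_left (hCanti δ γ hδ)
    have h3 : C γ * (C δ * C δ) = (ν ^ 2) • C γ := by
      rw [hCsq δ, Matrix.mul_smul, mul_one]
    have h1 : C δ * C γ * C δ = -((ν ^ 2) • C γ) := by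
      rw [hdg, neg_mul, mul_assoc, h3]
    have h2 : Matrix.trace (C δ * C γ * C δ) = (ν ^ 2) * Matrix.trace (C γ) := by
      rw [Matrix.trace_mul_cycle, hCsq δ, smul_mul_assoc, one_mul, Matrix.trace_smul,
        smul_eq_mul]
    rw [h1, Matrix.trace_neg, Matrix.trace_smul, smul_eq_mul] at h2
    have hz : (ν ^ 2) * Matrix.trace (C γ) = 0 := by linarith
    exact (mul_eq_zero.1 hz).resolve_left (ne_of_gt hν2)
  exact ⟨S.card, hdlt, _, qhm_of_system hdpos C (ν ^ 2) hν2 hCsymm hCtr hCsq hCanti⟩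


lemma qhm_two (n : ℕ) (hsub : ∀ β γ : Fin n, β = γ) :
    ∃ ψ : (Fin 2 → ℝ) → Fin n → ℝ, IsQuadraticHM ψ := by
  refine ⟨_, qhm_of_system (by norm_num) (fun _ => Matrix.diagonal ![1, -1]) 1 one_pos
    ?_ ?_ ?_ ?_⟩
  · intro γ; exact Matrix.isSymm_diagonal _
  · intro γ
    rw [Matrix.trace_diagonal]
    simp [Fin.sum_univ_two]
  · intro γ
    rw [Matrix.diagonal_mul_diagonal, one_smul]
    have hfun : (fun i => ![(1:ℝ), -1] i * ![(1:ℝ), -1] i) = fun _ => (1:ℝ) := by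
      funext i
      fin_cases i <;> norm_num
    rw [hfun, Matrix.diagonal_one]
  · intro γ δ h; exact absurd (hsub γ δ) h

lemma sq_scalar_two {A : Matrix (Fin 2) (Fin 2) ℝ} (hs : A.IsSymm) (ht : A.trace = 0) :
    A * A = (A 0 0 ^ 2 + A 0 1 ^ 2) • 1 := by
  have h10 : A 1 0 = A 0 1 := by
    have := congrFun (congrFun hs.eq 0) 1
    simpa using this
  have h11 : A 1 1 = -(A 0 0) := by
    rw [Matrix.trace_fin_two] at ht
    linarith
  ext i j
  fin_cases i <;> fin_cases j <;>
    simp [Matrix.mul_apply, Fin.sum_univ_two, Matrix.smul_apply, Matrix.one_apply, h10, h11] <;>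
    ring


/-- Every domain-minimal quadratic harmonic morphism
`ℝ^{2m} → ℝ^n` is umbilical. -/
theorem domain_minimal_is_umbilical (m n : ℕ) (φ : (Fin (m + m) → ℝ) → Fin n → ℝ)
    (hmin : DomainMinimal φ) : Umbilical φ := by
  obtain ⟨⟨⟨A, hrep⟩, hhm⟩, hminim⟩ := hmin
  refine ⟨A, hrep, ?_⟩
  intro α μ ν hμ hν heμ heν
  by_contra hne
  have hμν2 : μ ^ 2 ≠ ν ^ 2 := fun h => hne (by nlinarith)
  obtain ⟨htr, hsqeq, hanti⟩ := hm_extract hrep hhm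
  obtain ⟨hsymm, hAne, hval⟩ := hrep
  have hm1 : 1 ≤ m := by
    by_contra hm0
    have hm : m = 0 := by omega
    subst hm
    apply hAne α
    ext i j
    exact absurd i.isLt (by omega)
  by_cases hcard : 1 < Fintype.card (Fin n)
  · obtain ⟨d, hdlt, ψ, hψ⟩ := exists_smaller_qhm A hsymm hcard hsqeq hanti α hμν2 hν heμ heν
    exact hminim d hdlt ⟨ψ, hψ⟩
  · have hsub : ∀ β γ : Fin n, β = γ :=
      fun β γ => Fintype.card_le_one_iff.1 (not_lt.1 hcard) β γ
    by_cases hm2 : 2 ≤ m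
    · obtain ⟨ψ, hψ⟩ := qhm_two n hsub
      exact hminim 2 (by omega) ⟨ψ, hψ⟩
    · have hm : m = 1 := by omega
      subst hm
      have hsq2 := sq_scalar_two (A := A α) (hsymm α) (htr α)
      have h1 := eigen_sq hsq2 heμ
      have h2 := eigen_sq hsq2 heν
      exact hμν2 (h1.trans h2.symm)
end
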